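/- arXiv:0806.2457 — 3 statements merged into one kernel-verified Lean document; each statement's English description precedes it below -/
import Mathlib

section
/- Let f : ℝⁿ → ℝ be a differentiable nonnegative function satisfying ‖∇f(x)‖² ≤ 2 f(x) for all x. Then the function √f is Lipschitz with constant 1/√2, i.e. |√(f(x)) − √(f(y))| ≤ ‖x − y‖/√2 for all x, y ∈ ℝⁿ. -/
theorem stmt_0 (n : ℕ) (f : EuclideanSpace ℝ (Fin n) → ℝ)
    (hdiff : Differentiable ℝ f) (hnonneg : ∀ x, 0 ≤ f x)
    (hgrad : ∀ x, ‖gradient f x‖ ^ 2 ≤ 2 * f x) :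
    ∀ x y, |Real.sqrt (f x) - Real.sqrt (f y)| ≤ ‖x - y‖ / Real.sqrt 2 := by
  have hfd : ∀ x, ‖fderiv ℝ f x‖ = ‖gradient f x‖ := by
    intro x
    rw [gradient]
    exact ((InnerProductSpace.toDual ℝ _).symm.norm_map _).symm
  -- key: for ε > 0, g ε = √(f + ε) is 1/√2 Lipschitz
  have key : ∀ ε > (0:ℝ), ∀ x y,
      |Real.sqrt (f x + ε) - Real.sqrt (f y + ε)| ≤ ‖x - y‖ / Real.sqrt 2 := by
    intro ε hε x y
    set g : EuclideanSpace ℝ (Fin n) → ℝ := fun z => Real.sqrt (f z + ε) with hg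
    have hpos : ∀ z, 0 < f z + ε := fun z => by linarith [hnonneg z]
    have hderiv : ∀ z, HasFDerivAt g
        ((1 / (2 * Real.sqrt (f z + ε))) • (fderiv ℝ f z)) z := by
      intro z
      have h1 : HasDerivAt Real.sqrt (1 / (2 * Real.sqrt (f z + ε))) (f z + ε) :=
        Real.hasDerivAt_sqrt (hpos z).ne'
      have h2 : HasFDerivAt (fun w => f w + ε) (fderiv ℝ f z) z :=
        ((hdiff z).hasFDerivAt).add_const ε
      exact h1.comp_hasFDerivAt z h2
    have hbound : ∀ z, ‖(1 / (2 * Real.sqrt (f z + ε))) • (fderiv ℝ f z)‖ ≤ 1 / Real.sqrt 2 := by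
      intro z
      rw [norm_smul, Real.norm_eq_abs]
      have hs : 0 < Real.sqrt (f z + ε) := Real.sqrt_pos.2 (hpos z)
      rw [abs_of_pos (by positivity)]
      have hfz : ‖fderiv ℝ f z‖ ≤ Real.sqrt (2 * (f z + ε)) := by
        rw [hfd z]
        have h1 : ‖gradient f z‖ ^ 2 ≤ 2 * (f z + ε) := by linarith [hgrad z]
        calc ‖gradient f z‖ = Real.sqrt (‖gradient f z‖ ^ 2) := by
              rw [Real.sqrt_sq (norm_nonneg _)]
          _ ≤ Real.sqrt (2 * (f z + ε)) := Real.sqrt_le_sqrt h1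
      calc 1 / (2 * Real.sqrt (f z + ε)) * ‖fderiv ℝ f z‖
          ≤ 1 / (2 * Real.sqrt (f z + ε)) * Real.sqrt (2 * (f z + ε)) := by
            apply mul_le_mul_of_nonneg_left hfz (by positivity)
        _ = 1 / Real.sqrt 2 := by
            rw [Real.sqrt_mul (by norm_num : (0:ℝ) ≤ 2)]
            field_simp
            nlinarith [Real.sq_sqrt (by norm_num : (0:ℝ) ≤ 2), Real.sqrt_nonneg 2,
              Real.sqrt_nonneg (f z + ε)]
    have := Convex.norm_image_sub_le_of_norm_hasFDerivWithin_le
      (f := g) (f' := fun z => (1 / (2 * Real.sqrt (f z + ε))) • (fderiv ℝ f z))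
      (fun z _ => (hderiv z).hasFDerivWithinAt) (fun z _ => hbound z)
      convex_univ (Set.mem_univ y) (Set.mem_univ x)
    rw [Real.norm_eq_abs] at this
    calc |g x - g y| ≤ 1 / Real.sqrt 2 * ‖x - y‖ := this
      _ = ‖x - y‖ / Real.sqrt 2 := by ring
  intro x y
  refine le_of_forall_pos_le_add fun δ hδ => ?_
  set ε := (δ / 2) ^ 2 with hε
  have hεpos : (0:ℝ) < ε := by positivity
  have hsq : ∀ z, Real.sqrt (f z) ≤ Real.sqrt (f z + ε) ∧
      Real.sqrt (f z + ε) ≤ Real.sqrt (f z) + δ / 2 := by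
    intro z
    constructor
    · exact Real.sqrt_le_sqrt (by linarith)
    · have h1 : f z + ε ≤ (Real.sqrt (f z) + δ / 2) ^ 2 := by
        nlinarith [Real.sq_sqrt (hnonneg z), Real.sqrt_nonneg (f z)]
      calc Real.sqrt (f z + ε) ≤ Real.sqrt ((Real.sqrt (f z) + δ / 2) ^ 2) :=
            Real.sqrt_le_sqrt h1
        _ = Real.sqrt (f z) + δ / 2 := Real.sqrt_sq (by positivity)
  have h := key ε hεpos x y
  have hx := hsq x
  have hy := hsq y
  rw [abs_le] at h ⊢
  exact ⟨by linarith [h.1, hx.1, hx.2, hy.1, hy.2], by linarith [h.2, hx.1, hx.2, hy.1, hy.2]⟩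
end

section
/- Let λ₁ ≥ λ₂ ≥ … ≥ λ_l > 0 and suppose w : ℂ^l → ℂ^l is an entire map with w(0) = 0 satisfying λ_i·w^i = Σ_j λ_j·z^j·∂w^i/∂z^j for all i. Then w is an upper-triangular polynomial map: w(z) = A(z) + G(z), where A is linear and each G_i depends only on the variables z^{i+1}, …, z^l. -/
/-!
With `Λ = diag(λ)`, differentiating `t ↦ w(e^{tΛ} z)` and using the equation shows that
`w^i(e^{tΛ} z) = e^{tλ_i} w^i(z)`. Restricting `w^i` to a complex line in the direction `e_j`,
its `n`-th Taylor coefficient then scales like `e^{t(λ_i - nλ_j)}`; since `e^{tΛ}` contracts for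
`t ≤ 0`, Cauchy's estimate forces this coefficient to vanish once `nλ_j > λ_i`. So `w^i` is a
polynomial of bounded degree in each variable separately, hence (by Lagrange interpolation on a
grid) a polynomial. Comparing `w^i(e^{Λ} z) = e^{λ_i} w^i(z)` coefficientwise, every monomial
`z^m` of `w^i` has `∑ m_j λ_j = λ_i`. If `m_j ≠ 0` for some `j ≤ i`, then `λ_j ≥ λ_i` and
positivity force `z^m = z^j`; so the nonlinear part of `w^i` only involves the variables `z^j`
with `j > i`.
-/

open Finset Function Polynomial Filter Topology Complex Nat

section SeparatelyPolynomial

variable {K σ : Type*} [Field K] [Fintype σ] [DecidableEq σ]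

def IsSeparatelyPolynomial (N : ℕ) (f : (σ → K) → K) : Prop :=
  ∀ j x, ∃ q ∈ degreeLT K N, ∀ t, f (update x j t) = q.eval t

theorem IsSeparatelyPolynomial.eq_of_eqOn_grid {s : Finset K} {f g : (σ → K) → K}
    (hf : IsSeparatelyPolynomial #s f) (hg : IsSeparatelyPolynomial #s g)
    (h : ∀ x, (∀ j, x j ∈ s) → f x = g x) : f = g := by
  suffices H : ∀ T : Finset σ, ∀ x, (∀ j ∉ T, x j ∈ s) → f x = g x from
    _root_.funext fun x => H univ x (by simp)
  intro T
  induction T using Finset.induction_on with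
  | empty => simpa using h
  | insert j T _ ih =>
    intro x hx
    obtain ⟨p, hp, hfp⟩ := hf j x
    obtain ⟨q, hq, hgq⟩ := hg j x
    have hpq : p = q := by
      refine Polynomial.eq_of_degrees_lt_of_eval_index_eq s (Set.injOn_id _) (mem_degreeLT.1 hp)
        (mem_degreeLT.1 hq) fun t ht => ?_
      rw [id, ← hfp, ← hgq]
      refine ih _ fun k hk => ?_
      rcases eq_or_ne k j with rfl | hkj
      · simpa
      · rw [update_of_ne hkj]
        exact hx k (by simp [hkj, hk])
    rw [← update_eq_self j x, hfp, hgq, hpq]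

end SeparatelyPolynomial

namespace MvPolynomial

variable {K σ : Type*} [Field K]

theorem eval_aeval_X (q : K[X]) (x : σ → K) (j : σ) :
    eval x (Polynomial.aeval (X j) q) = q.eval (x j) := by
  simp [← coe_aeval_eq_eval, ← Polynomial.aeval_algHom_apply]

variable [DecidableEq K] [Fintype σ] [DecidableEq σ]

noncomputable def gridInterpolate (s : Finset K) (f : (σ → K) → K) : MvPolynomial σ K :=
  ∑ a ∈ Fintype.piFinset fun _ => s,
    C (f a) * ∏ j, Polynomial.aeval (X j) (Lagrange.basis s id (a j))

theorem eval_gridInterpolate (s : Finset K) (f : (σ → K) → K) (x : σ → K) :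
    eval x (gridInterpolate s f) =
      ∑ a ∈ Fintype.piFinset fun _ => s, f a * ∏ j, (Lagrange.basis s id (a j)).eval (x j) := by
  simp only [gridInterpolate, map_sum, map_mul, map_prod, eval_C, eval_aeval_X]

theorem eval_gridInterpolate_of_mem {s : Finset K} (f : (σ → K) → K) {x : σ → K}
    (hx : ∀ j, x j ∈ s) : eval x (gridInterpolate s f) = f x := by
  rw [eval_gridInterpolate, sum_eq_single_of_mem x (Fintype.mem_piFinset.2 hx)]
  · rw [prod_eq_one fun j _ => ?_, mul_one]
    exact Lagrange.eval_basis_self (v := id) (Set.injOn_id _) (hx j)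
  · intro a _ hax
    obtain ⟨j, hj⟩ := Function.ne_iff.1 hax
    rw [prod_eq_zero (mem_univ j) (Lagrange.eval_basis_of_ne (v := id) hj (hx j)),
      mul_zero]

theorem isSeparatelyPolynomial_eval_gridInterpolate (s : Finset K) (f : (σ → K) → K) :
    IsSeparatelyPolynomial #s fun x => eval x (gridInterpolate s f) := by
  intro j x
  refine ⟨∑ a ∈ Fintype.piFinset fun _ => s,
    (f a * ∏ k ∈ univ.erase j, (Lagrange.basis s id (a k)).eval (x k)) •
      Lagrange.basis s id (a j), Submodule.sum_mem _ fun a ha => Submodule.smul_mem _ _ ?_,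
    fun t => ?_⟩
  · rw [mem_degreeLT, Lagrange.degree_basis (Set.injOn_id _) (Fintype.mem_piFinset.1 ha j)]
    exact_mod_cast Nat.sub_lt (card_pos.2 ⟨_, Fintype.mem_piFinset.1 ha j⟩) one_pos
  · dsimp only
    rw [eval_gridInterpolate, eval_finsetSum]
    refine sum_congr rfl fun a _ => ?_
    rw [eval_smul, smul_eq_mul, ← mul_prod_erase univ _ (mem_univ j), update_self,
      prod_congr rfl fun k hk => by rw [update_of_ne (ne_of_mem_erase hk)]]
    ring

end MvPolynomial

theorem IsSeparatelyPolynomial.exists_mvPolynomial_eval_eq {K σ : Type*} [Field K] [Infinite K]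
    [Fintype σ] [DecidableEq σ] {N : ℕ} {f : (σ → K) → K}
    (hf : IsSeparatelyPolynomial N f) :
    ∃ p : MvPolynomial σ K, ∀ x, f x = MvPolynomial.eval x p := by
  classical
  obtain ⟨s, rfl⟩ := Infinite.exists_subset_card_eq K N
  refine ⟨MvPolynomial.gridInterpolate s f, congrFun (hf.eq_of_eqOn_grid
    (MvPolynomial.isSeparatelyPolynomial_eval_gridInterpolate s f) fun x hx => ?_)⟩
  exact (MvPolynomial.eval_gridInterpolate_of_mem f hx).symm

theorem Finsupp.eq_single_one_of_weight_le {σ M : Type*} [AddCommMonoid M] [PartialOrder M]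
    [IsOrderedCancelAddMonoid M] {w : σ → M} (hw : ∀ k, 0 < w k) {m : σ →₀ ℕ} {j : σ}
    (hj : m j ≠ 0) (hle : weight w m ≤ w j) : m = single j 1 := by
  have hsub : m - single j 1 = 0 := by
    ext k
    by_contra hk
    have hk' := le_weight_of_ne_zero (fun s => (hw s).le) hk
    have hsplit := weight_sub_single_add (w := w) hj
    have : weight w (m - single j 1) ≤ 0 := le_of_add_le_add_right (by rwa [hsplit, zero_add])
    exact (hw k).not_ge (hk'.trans this)
  rw [← sub_add_single_one_cancel hj, hsub, zero_add]

namespace MvPolynomial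

variable {σ R : Type*}

theorem prod_pow_eq_of_eval_mul_eq [CommRing R] [IsDomain R] [Infinite R] [Fintype σ]
    {p : MvPolynomial σ R} {c : σ → R} {a : R}
    (h : ∀ z, eval (fun k => c k * z k) p = a * eval z p) {m : σ →₀ ℕ} (hm : coeff m p ≠ 0) :
    ∏ k, c k ^ m k = a := by
  classical
  set S := ∑ d ∈ p.support, monomial d (coeff d p * ∏ k, c k ^ d k)
  have hS : S = C a * p := funext fun z => by
    rw [eval_mul, eval_C, ← h, eval_eq' _ p, map_sum]
    refine sum_congr rfl fun d _ => ?_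
    rw [eval_monomial, Finsupp.prod_fintype _ _ fun _ => pow_zero _, mul_assoc,
      ← prod_mul_distrib]
    simp_rw [mul_pow]
  have hcoeff := congrArg (coeff m) hS
  rw [coeff_C_mul, coeff_sum, sum_eq_single_of_mem m (mem_support_iff.2 hm)
    fun d _ hd => by rw [coeff_monomial, if_neg hd], coeff_monomial, if_pos rfl] at hcoeff
  exact mul_left_cancel₀ hm (hcoeff.trans (mul_comm _ _))

theorem isWeightedHomogeneous_of_eval_exp_mul [Fintype σ] {p : MvPolynomial σ ℂ} {lam : σ → ℝ}
    {α : ℝ} (h : ∀ z, eval (fun k => cexp (lam k) * z k) p = cexp α * eval z p) :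
    IsWeightedHomogeneous lam p α := by
  intro m hm
  have hprod := prod_pow_eq_of_eval_mul_eq h hm
  simp_rw [← Complex.exp_nat_mul, ← Complex.exp_sum] at hprod
  rw [Finsupp.weight_eq_sum]
  apply Real.exp_injective
  apply Complex.ofReal_injective
  push_cast
  simpa [nsmul_eq_mul] using hprod

theorem homogeneousComponent_one_eq_toMvPolynomial [CommSemiring R] [Fintype σ]
    {ι : Type*} (p : ι → MvPolynomial σ R) (i : ι) :
    homogeneousComponent 1 (p i) =
      (Matrix.of fun i j => coeff (Finsupp.single j 1) (p i)).toMvPolynomial i := by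
  classical
  ext m
  simp only [coeff_homogeneousComponent, Matrix.toMvPolynomial, coeff_sum, coeff_monomial,
    Matrix.of_apply]
  split_ifs with hm
  · obtain ⟨j, rfl⟩ : m ∈ Set.range fun a => Finsupp.single a 1 := by
      rw [Finsupp.range_single_one]; exact hm
    rw [sum_eq_single j (fun b _ hb => if_neg fun h => hb (Finsupp.single_left_injective
      one_ne_zero h)) (by simp), if_pos rfl]
  · refine (sum_eq_zero fun j _ => if_neg ?_).symm
    rintro rfl
    exact hm (Finsupp.degree_single j 1)

theorem IsWeightedHomogeneous.lt_of_coeff_sub_homogeneousComponent_one_ne_zero [LinearOrder σ]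
    [CommRing R] {p : MvPolynomial σ R} {lam : σ → ℝ} (hpos : ∀ k, 0 < lam k)
    (hanti : Antitone lam) {i : σ} (hp : IsWeightedHomogeneous lam p (lam i)) {m : σ →₀ ℕ}
    (hm : coeff m (p - homogeneousComponent 1 p) ≠ 0) {j : σ} (hj : j ∈ m.support) : i < j := by
  rw [coeff_sub, coeff_homogeneousComponent] at hm
  have hpm : coeff m p ≠ 0 := fun h => hm (by simp [h])
  by_contra! hji
  obtain rfl := Finsupp.eq_single_one_of_weight_le hpos (Finsupp.mem_support_iff.1 hj)
    ((hp hpm).trans_le (hanti hji))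
  simp [Finsupp.degree_single] at hm

end MvPolynomial

theorem Differentiable.exists_mem_degreeLT_of_iteratedDeriv_eq_zero {f : ℂ → ℂ}
    (hf : Differentiable ℂ f) {N : ℕ} (h : ∀ n, N ≤ n → iteratedDeriv n f 0 = 0) :
    ∃ q ∈ degreeLT ℂ N, ∀ s, f s = q.eval s := by
  refine ⟨∑ n ∈ range N, monomial n ((n ! : ℂ)⁻¹ * iteratedDeriv n f 0),
    Submodule.sum_mem _ fun n hn => mem_degreeLT.2 ((degree_monomial_le _ _).trans_lt
      (by exact_mod_cast mem_range.1 hn)), fun s => ?_⟩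
  have hterm : ∀ n, (n ! : ℂ)⁻¹ • (s - 0) ^ n • iteratedDeriv n f 0 =
      eval s (monomial n ((n ! : ℂ)⁻¹ * iteratedDeriv n f 0)) := by
    intro n
    rw [eval_monomial, sub_zero, smul_eq_mul, smul_eq_mul]
    ring
  have htaylor := Complex.hasSum_taylorSeries_of_entire hf 0 s
  simp_rw [hterm] at htaylor
  rw [eval_finsetSum]
  exact htaylor.unique (hasSum_sum_of_ne_finset_zero fun n hn => by
    rw [h n (by simpa using hn), mul_zero, map_zero, eval_zero])

section WeightedFlow

variable {σ : Type*}

-- The flow of the soliton field `Z = ∑ μ_k z^k ∂/∂z^k`.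
noncomputable def weightedFlow (μ : σ → ℂ) (t : ℂ) (z : σ → ℂ) : σ → ℂ :=
  fun k => cexp (t * μ k) * z k

theorem hasDerivAt_weightedFlow (μ : σ → ℂ) (t : ℂ) (z : σ → ℂ) :
    HasDerivAt (fun t => weightedFlow μ t z) (fun k => μ k * weightedFlow μ t z k) t := by
  refine hasDerivAt_pi.2 fun k => ?_
  exact ((hasDerivAt_mul_const (μ k)).cexp.mul_const (z k)).congr_deriv
    (by simp only [weightedFlow]; ring)

variable [Fintype σ]

theorem norm_weightedFlow_le {lam : σ → ℝ} (hlam : ∀ k, 0 ≤ lam k) {t : ℝ} (ht : t ≤ 0)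
    (z : σ → ℂ) : ‖weightedFlow (fun k => (lam k : ℂ)) t z‖ ≤ ‖z‖ := by
  refine (pi_norm_le_iff_of_nonneg (norm_nonneg z)).2 fun k => ?_
  rw [weightedFlow, norm_mul, ← ofReal_mul, norm_exp_ofReal]
  have hexp : Real.exp (t * lam k) ≤ 1 :=
    Real.exp_le_one_iff.2 (mul_nonpos_of_nonpos_of_nonneg ht (hlam k))
  exact (mul_le_of_le_one_left (norm_nonneg _) hexp).trans (norm_le_pi_norm z k)

variable [DecidableEq σ]

theorem fderiv_apply_mul_eq {μ : σ → ℂ} {w : (σ → ℂ) → σ → ℂ}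
    (heq : ∀ i z, μ i * w z i = ∑ j, μ j * z j * fderiv ℂ w z (Pi.single j 1) i)
    (y : σ → ℂ) (i : σ) : fderiv ℂ w y (fun k => μ k * y k) i = μ i * w y i := by
  conv_lhs => rw [← Finset.univ_sum_single fun k => μ k * y k]
  have hsingle : ∀ j, Pi.single j (μ j * y j) = (μ j * y j) • (Pi.single j 1 : σ → ℂ) := by
    intro j; ext k; simp [Pi.single_apply]
  simp only [hsingle, map_sum, map_smul, Finset.sum_apply, Pi.smul_apply, smul_eq_mul, heq]

theorem apply_weightedFlow {μ : σ → ℂ} {w : (σ → ℂ) → σ → ℂ} (hw : Differentiable ℂ w)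
    (heq : ∀ i z, μ i * w z i = ∑ j, μ j * z j * fderiv ℂ w z (Pi.single j 1) i)
    (t : ℂ) (z : σ → ℂ) (i : σ) : w (weightedFlow μ t z) i = cexp (t * μ i) * w z i := by
  have hderiv : ∀ s, HasDerivAt (fun s => cexp (-(s * μ i)) * w (weightedFlow μ s z) i) 0 s := by
    intro s
    have hwi := hasDerivAt_pi.1
      ((hw _).hasFDerivAt.comp_hasDerivAt s (hasDerivAt_weightedFlow μ s z)) i
    rw [Function.comp_def, fderiv_apply_mul_eq heq] at hwi
    exact ((hasDerivAt_mul_const (μ i)).neg.cexp.mul hwi).congr_deriv (by ring)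
  have hconst := is_const_of_deriv_eq_zero (fun s => (hderiv s).differentiableAt)
    (fun s => (hderiv s).deriv) t 0
  have hflow0 : weightedFlow μ 0 z = z := by ext k; simp [weightedFlow]
  rw [hflow0, zero_mul, neg_zero, Complex.exp_zero, one_mul] at hconst
  rw [← hconst, ← mul_assoc, ← Complex.exp_add, add_neg_cancel, Complex.exp_zero, one_mul]

omit [Fintype σ] in
theorem update_weightedFlow (μ : σ → ℂ) (t : ℂ) (x : σ → ℂ) (j : σ) (s : ℂ) :
    update (weightedFlow μ t x) j s = weightedFlow μ t (update x j (cexp (-(t * μ j)) * s)) := by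
  ext k
  rcases eq_or_ne k j with rfl | hkj
  · simp [weightedFlow, ← mul_assoc, ← Complex.exp_add]
  · simp [weightedFlow, hkj]

theorem Differentiable.comp_update {f : (σ → ℂ) → ℂ} (hf : Differentiable ℂ f) (x : σ → ℂ)
    (j : σ) : Differentiable ℂ fun s => f (update x j s) :=
  hf.comp fun s => (hasFDerivAt_update x s).differentiableAt

theorem iteratedDeriv_update_weightedFlow {μ : σ → ℂ} {t α : ℂ} {f : (σ → ℂ) → ℂ}
    (hf : Differentiable ℂ f) (hhom : ∀ z, f (weightedFlow μ t z) = cexp (t * α) * f z)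
    (x : σ → ℂ) (j : σ) (n : ℕ) :
    iteratedDeriv n (fun s => f (update (weightedFlow μ t x) j s)) 0 =
      cexp (t * α) * cexp (-(t * μ j)) ^ n * iteratedDeriv n (fun s => f (update x j s)) 0 := by
  simp_rw [update_weightedFlow, hhom]
  rw [iteratedDeriv_const_mul_field, iteratedDeriv_comp_const_mul (hf.comp_update x j).contDiff]
  simp only [mul_zero, mul_assoc]

theorem norm_iteratedDeriv_update_le {f : (σ → ℂ) → ℂ} (hf : Differentiable ℂ f) {x : σ → ℂ}
    {C : ℝ} (hC : ∀ y, ‖y‖ ≤ ‖x‖ + 1 → ‖f y‖ ≤ C) (j : σ) (n : ℕ) :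
    ‖iteratedDeriv n (fun s => f (update x j s)) 0‖ ≤ n ! * C := by
  have h := Complex.norm_iteratedDeriv_le_of_forall_mem_sphere_norm_le (c := 0) n one_pos
    (hf.comp_update x j).diffContOnCl fun s hs => hC _ ?_
  · simpa using h
  refine (pi_norm_le_iff_of_nonneg (by positivity)).2 fun k => ?_
  rcases eq_or_ne k j with rfl | hkj
  · simp [mem_sphere_zero_iff_norm.1 hs]
  · rw [update_of_ne hkj]
    exact (norm_le_pi_norm x k).trans (le_add_of_nonneg_right zero_le_one)

theorem iteratedDeriv_update_eq_zero {lam : σ → ℝ} (hlam : ∀ k, 0 ≤ lam k)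
    {f : (σ → ℂ) → ℂ} (hf : Differentiable ℂ f) {α : ℝ}
    (hhom : ∀ (t : ℝ) z, f (weightedFlow (fun k => (lam k : ℂ)) t z) = cexp (t * α) * f z)
    {j : σ} {n : ℕ} (hn : α < n * lam j) (x : σ → ℂ) :
    iteratedDeriv n (fun s => f (update x j s)) 0 = 0 := by
  obtain ⟨C, hC⟩ := (isCompact_closedBall (0 : σ → ℂ) (‖x‖ + 1)).exists_bound_of_continuousOn
    hf.continuous.continuousOn
  have hbound : ∀ t : ℝ, t ≤ 0 → ‖iteratedDeriv n (fun s => f (update x j s)) 0‖ ≤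
      n ! * C * Real.exp (t * (n * lam j - α)) := by
    intro t ht
    have h := norm_iteratedDeriv_update_le hf (x := weightedFlow _ t x) (C := C)
      (fun y hy => hC y (mem_closedBall_zero_iff.2
        (hy.trans (by linarith [norm_weightedFlow_le hlam ht x])))) j n
    rw [iteratedDeriv_update_weightedFlow hf (hhom t) x j n, norm_mul, norm_mul, norm_pow,
      ← ofReal_mul, ← ofReal_mul, ← ofReal_neg, norm_exp_ofReal, norm_exp_ofReal,
      ← Real.exp_nat_mul, ← Real.exp_add] at h
    rw [show t * (n * lam j - α) = -(t * α + n * -(t * lam j)) by ring, Real.exp_neg,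
      ← div_eq_mul_inv, le_div_iff₀ (Real.exp_pos _), mul_comm]
    exact h
  have hlim : Tendsto (fun t : ℝ => n ! * C * Real.exp (t * (n * lam j - α))) atBot (𝓝 0) := by
    simpa using (Real.tendsto_exp_atBot.comp
      (tendsto_id.atBot_mul_const (sub_pos.2 hn))).const_mul (n ! * C)
  exact norm_le_zero_iff.1 (ge_of_tendsto hlim ((eventually_le_atBot 0).mono hbound))

theorem isSeparatelyPolynomial_of_apply_weightedFlow {lam : σ → ℝ} (hlam : ∀ k, 0 ≤ lam k)
    {f : (σ → ℂ) → ℂ} (hf : Differentiable ℂ f) {α : ℝ}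
    (hhom : ∀ (t : ℝ) z, f (weightedFlow (fun k => (lam k : ℂ)) t z) = cexp (t * α) * f z)
    {N : ℕ} (hN : ∀ j, α < N * lam j) : IsSeparatelyPolynomial N f := fun j x =>
  (hf.comp_update x j).exists_mem_degreeLT_of_iteratedDeriv_eq_zero fun n hn =>
    iteratedDeriv_update_eq_zero hlam hf hhom
      ((hN j).trans_le (mul_le_mul_of_nonneg_right (by exact_mod_cast hn) (hlam j))) x

end WeightedFlow

theorem exists_nat_forall_lt_mul {ι : Type*} [Fintype ι] {a : ι → ℝ} (ha : ∀ i, 0 < a i) :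
    ∃ N : ℕ, ∀ i j, a i < N * a j := by
  obtain ⟨N, hN⟩ := exists_nat_gt (∑ i, ∑ j, a i / a j)
  refine ⟨N, fun i j => (div_lt_iff₀ (ha j)).1 (lt_of_le_of_lt ?_ hN)⟩
  have hnonneg : ∀ i j, 0 ≤ a i / a j := fun i j => (div_pos (ha i) (ha j)).le
  exact (single_le_sum (fun j _ => hnonneg i j) (mem_univ j)).trans
    (single_le_sum (f := fun i => ∑ j, a i / a j) (fun i _ => sum_nonneg fun j _ => hnonneg i j)
      (mem_univ i))

open MvPolynomial in
theorem stmt_8_general (l : ℕ) (lam : Fin l → ℝ)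
    (hpos : ∀ i, 0 < lam i)
    (hdec : ∀ i j : Fin l, i ≤ j → lam j ≤ lam i)
    (w : (Fin l → ℂ) → Fin l → ℂ)
    (hw : Differentiable ℂ w)
    (heq : ∀ (i : Fin l) (z : Fin l → ℂ),
      (lam i : ℂ) * w z i =
        ∑ j : Fin l, (lam j : ℂ) * z j * fderiv ℂ w z (Pi.single j 1) i) :
    ∃ (A : (Fin l → ℂ) →ₗ[ℂ] (Fin l → ℂ)) (G : (Fin l → ℂ) → Fin l → ℂ),
      (∀ z, w z = A z + G z) ∧
      (∀ i, ∃ p : MvPolynomial (Fin l) ℂ, ∀ z, G z i = MvPolynomial.eval z p) ∧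
      (∀ (i : Fin l) (z z' : Fin l → ℂ),
        (∀ j : Fin l, i < j → z j = z' j) → G z i = G z' i) := by
  have hhom := apply_weightedFlow (μ := fun k => (lam k : ℂ)) hw heq
  obtain ⟨N, hN⟩ := exists_nat_forall_lt_mul hpos
  have hP : ∀ i, ∃ P : MvPolynomial (Fin l) ℂ,
      IsWeightedHomogeneous lam P (lam i) ∧ ∀ z, w z i = eval z P := by
    intro i
    obtain ⟨P, hP⟩ := (isSeparatelyPolynomial_of_apply_weightedFlow (fun k => (hpos k).le)
      (differentiable_pi.1 hw i) (fun t z => hhom t z i) (hN i)).exists_mvPolynomial_eval_eq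
    refine ⟨P, isWeightedHomogeneous_of_eval_exp_mul fun z => ?_, hP⟩
    have hflow : weightedFlow (fun k => (lam k : ℂ)) 1 z = fun k => cexp (lam k) * z k := by
      ext k; simp [weightedFlow]
    rw [← hP, ← hP, ← hflow, hhom, one_mul]
  choose P hPhom hPeval using hP
  refine ⟨Matrix.mulVecLin (Matrix.of fun i j => coeff (Finsupp.single j 1) (P i)),
    fun z i => eval z (P i - homogeneousComponent 1 (P i)), fun z => ?_,
    fun i => ⟨_, fun z => rfl⟩, fun i z z' hzz' => ?_⟩
  · ext i
    rw [Pi.add_apply, Matrix.mulVecLin_apply, ← Matrix.toMvPolynomial_eval_eq_apply,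
      ← homogeneousComponent_one_eq_toMvPolynomial]
    dsimp only
    rw [map_sub, hPeval, add_sub_cancel]
  · exact MvPolynomial.eval₂_congr _ _ _ fun hk hm => hzz' _
      ((hPhom i).lt_of_coeff_sub_homogeneousComponent_one_ne_zero hpos hdec hm hk)

theorem stmt_8 (l : ℕ) (lam : Fin l → ℝ)
    (hpos : ∀ i, 0 < lam i)
    (hdec : ∀ i j : Fin l, i ≤ j → lam j ≤ lam i)
    (w : (Fin l → ℂ) → Fin l → ℂ)
    (hw : Differentiable ℂ w) (hw0 : w 0 = 0)
    (heq : ∀ (i : Fin l) (z : Fin l → ℂ),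
      (lam i : ℂ) * w z i =
        ∑ j : Fin l, (lam j : ℂ) * z j * fderiv ℂ w z (Pi.single j 1) i) :
    ∃ (A : (Fin l → ℂ) →ₗ[ℂ] (Fin l → ℂ)) (G : (Fin l → ℂ) → Fin l → ℂ),
      (∀ z, w z = A z + G z) ∧
      (∀ i, ∃ p : MvPolynomial (Fin l) ℂ, ∀ z, G z i = MvPolynomial.eval z p) ∧
      (∀ (i : Fin l) (z z' : Fin l → ℂ),
        (∀ j : Fin l, i < j → z j = z' j) → G z i = G z' i) :=
  stmt_8_general l lam hpos hdec w hw heq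
end

section
/- Let c > 0, ε > 0, C > 0 with ε < c·r₂/4 and r₂ < c/(2C), and let x : [0, ∞) → ℝⁿ be differentiable with (d/dτ)‖x(τ)‖² ≤ −2c‖x(τ)‖² + 2ε‖x(τ)‖ + 2C‖x(τ)‖³ whenever ‖x(τ)‖ ≤ r₂. If ‖x(0)‖ < r₂, then ‖x(τ)‖ < r₂ for all τ ≥ 0. -/
open Set

/-- Strict form of `image_le_of_deriv_right_lt_deriv_boundary`: a touching time `t > a` of the
level `R` would be a local maximum of `f`, where `deriv f t = 0`. -/
theorem lt_of_deriv_neg_of_eq {f : ℝ → ℝ} {a R : ℝ} (hf : Differentiable ℝ f) (ha : f a < R)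
    (hR : ∀ t, a ≤ t → f t = R → deriv f t < 0) : ∀ t, a ≤ t → f t < R := by
  have hle : ∀ t, a ≤ t → f t ≤ R := fun t ht =>
    image_le_of_deriv_right_lt_deriv_boundary (f' := deriv f) (B := fun _ => R) (B' := 0)
      hf.continuous.continuousOn (fun s _ => (hf s).hasDerivAt.hasDerivWithinAt) ha.le
      (fun _ => hasDerivAt_const _ _) (fun s hs hfs => hR s hs.1 hfs) ⟨ht, le_rfl⟩
  intro t ht
  refine (hle t ht).lt_of_ne fun hft => ?_
  have hat : a < t := ht.lt_of_ne (by rintro rfl; exact ha.ne hft)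
  have hmax : IsLocalMax f t :=
    Filter.mem_of_superset (Ioi_mem_nhds hat) fun s hs => hft ▸ hle s (le_of_lt hs)
  exact (hR t ht hft).ne hmax.deriv_eq_zero

theorem neg_two_mul_sq_add_two_mul_add_two_mul_cube_neg {c ε C r : ℝ} (hC : 0 < C) (hr : 0 < r)
    (hε : ε < c * r / 4) (hrC : r < c / (2 * C)) :
    -2 * c * r ^ 2 + 2 * ε * r + 2 * C * r ^ 3 < 0 := by
  have hCr : 2 * C * r < c := by rwa [lt_div_iff₀ (by positivity), mul_comm] at hrC
  have hfactor : -c * r + ε + C * r ^ 2 < 0 := by nlinarith [mul_pos hC (mul_pos hr hr)]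
  calc -2 * c * r ^ 2 + 2 * ε * r + 2 * C * r ^ 3 = 2 * r * (-c * r + ε + C * r ^ 2) := by ring
    _ < 0 := mul_neg_of_pos_of_neg (by positivity) hfactor

theorem stmt_14_general (n : ℕ) (c ε C r₂ : ℝ)
    (hC : 0 < C)
    (hε' : ε < c * r₂ / 4) (hr₂ : r₂ < c / (2 * C))
    (x : ℝ → EuclideanSpace ℝ (Fin n)) (hx : Differentiable ℝ x)
    (hderiv : ∀ τ, 0 ≤ τ → ‖x τ‖ ≤ r₂ →
      deriv (fun s => ‖x s‖ ^ 2) τ ≤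
        -2 * c * ‖x τ‖ ^ 2 + 2 * ε * ‖x τ‖ + 2 * C * ‖x τ‖ ^ 3)
    (h0 : ‖x 0‖ < r₂) :
    ∀ τ, 0 ≤ τ → ‖x τ‖ < r₂ := by
  have hr₂pos : 0 < r₂ := (norm_nonneg _).trans_lt h0
  have hsq : ∀ τ, 0 ≤ τ → ‖x τ‖ ^ 2 < r₂ ^ 2 := by
    refine lt_of_deriv_neg_of_eq (f := fun s => ‖x s‖ ^ 2) (hx.norm_sq ℝ) (by gcongr) ?_
    intro τ hτ hxτ
    have hnorm : ‖x τ‖ = r₂ := (sq_eq_sq₀ (norm_nonneg _) hr₂pos.le).1 hxτ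
    calc deriv (fun s => ‖x s‖ ^ 2) τ
        ≤ -2 * c * ‖x τ‖ ^ 2 + 2 * ε * ‖x τ‖ + 2 * C * ‖x τ‖ ^ 3 := hderiv τ hτ hnorm.le
      _ < 0 := hnorm ▸ neg_two_mul_sq_add_two_mul_add_two_mul_cube_neg hC hr₂pos hε' hr₂
  exact fun τ hτ => (pow_lt_pow_iff_left₀ (norm_nonneg _) hr₂pos.le two_ne_zero).1 (hsq τ hτ)

theorem stmt_14 (n : ℕ) (c ε C r₂ : ℝ)
    (hc : 0 < c) (hε : 0 < ε) (hC : 0 < C)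
    (hε' : ε < c * r₂ / 4) (hr₂ : r₂ < c / (2 * C))
    (x : ℝ → EuclideanSpace ℝ (Fin n)) (hx : Differentiable ℝ x)
    (hderiv : ∀ τ, 0 ≤ τ → ‖x τ‖ ≤ r₂ →
      deriv (fun s => ‖x s‖ ^ 2) τ ≤
        -2 * c * ‖x τ‖ ^ 2 + 2 * ε * ‖x τ‖ + 2 * C * ‖x τ‖ ^ 3)
    (h0 : ‖x 0‖ < r₂) :
    ∀ τ, 0 ≤ τ → ‖x τ‖ < r₂ :=
  stmt_14_general n c ε C r₂ hC hε' hr₂ x hx hderiv h0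
end
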